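/- Let X_{1,λ}, …, X_{k,λ} be independent degenerate zero-truncated Poisson random variables each with parameter α > 0 and X_λ = ∑ X_{i,λ}. Then for n ≥ k, P(X_λ = n) = (α^n / (n! (e_λ(α)−1)^k)) ∑_{l=0}^{k} C(k,l)(−1)^{k−l}(l)_{n,λ}. -/

import Mathlib

open Real Filter Finset

/-- λ-falling factorial (x)_{n,λ} = x(x-λ)⋯(x-(n-1)λ). -/
noncomputable def dfall (lam x : ℝ) (n : ℕ) : ℝ := ∏ j ∈ Finset.range n, (x - j * lam)

/-- degenerate exponential e_λ(t) = (1+λt)^{1/λ}. -/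
noncomputable def dexp (lam t : ℝ) : ℝ := (1 + lam * t) ^ (1 / lam)

/-- PMF of the degenerate zero-truncated Poisson random variable (for n ≥ 1). -/
noncomputable def ztP (lam a : ℝ) (n : ℕ) : ℝ :=
  1 / (dexp lam a - 1) * (a ^ n / (Nat.factorial n : ℝ)) * dfall lam 1 n

/-!
The alternating sum `∑ₗ C(k,l) (-1)^(k-l) (l)_{n,λ}` is the `k`-th forward difference of
`x ↦ (x)_{n,λ}` at `0`. Write `P_k(n)` (`ztSumP`) for the claimed probability. The Vandermonde
identity `(x+1)_{n,λ} = ∑ C(n,m) (1)_{m,λ} (x)_{n-m,λ}` turns one more difference into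
`P_{k+1} = P_k ⋆ ztP - P_k ⬝ ztP 0`, a convolution with the `m = 0` term removed. By independence,
the law of a partial sum `∑_{i ∈ s} X_i` obeys the same recursion, since `P(X_i = 0) = 0`.
Induction on `s` finishes the proof.
-/

lemma dfall_zero (lam x : ℝ) : dfall lam x 0 = 1 := prod_range_zero _

lemma dfall_succ (lam x : ℝ) (n : ℕ) : dfall lam x (n + 1) = dfall lam x n * (x - n * lam) :=
  prod_range_succ _ n

lemma dfall_zero_left (lam : ℝ) (n : ℕ) : dfall lam 0 n = if n = 0 then 1 else 0 := by
  cases n with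
  | zero => exact dfall_zero lam 0
  | succ n => simp [dfall, prod_range_succ']

lemma dfall_add (lam x y : ℝ) (n : ℕ) :
    dfall lam (x + y) n
      = ∑ p ∈ antidiagonal n, (n.choose p.1 : ℝ) * dfall lam x p.1 * dfall lam y p.2 := by
  induction n with
  | zero => simp [dfall_zero]
  | succ n ih =>
    simp_rw [mul_assoc]
    rw [sum_antidiagonal_choose_succ_mul (fun i j => dfall lam x i * dfall lam y j), dfall_succ,
      ih, sum_mul, ← sum_add_distrib]
    refine sum_congr rfl fun ⟨i, j⟩ hij => ?_
    obtain rfl : i + j = n := HasAntidiagonal.mem_antidiagonal.mp hij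
    -- `x + y - (i + j) λ = (x - i λ) + (y - j λ)`
    rw [Nat.choose_symm_add, dfall_succ, dfall_succ]
    push_cast
    ring

/-- This is `k! S_{2,λ}(n, k)`, with `S_{2,λ}` the degenerate Stirling numbers of the second kind. -/
noncomputable def fwdDiffDfall (lam : ℝ) (k n : ℕ) : ℝ :=
  (fwdDiff 1)^[k] (fun x => dfall lam x n) 0

lemma fwdDiffDfall_eq_sum (lam : ℝ) (k n : ℕ) :
    fwdDiffDfall lam k n
      = ∑ l ∈ range (k + 1), (k.choose l : ℝ) * (-1) ^ (k - l) * dfall lam l n := by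
  simp [fwdDiffDfall, fwdDiff_iter_eq_sum_shift, mul_comm]

lemma fwdDiffDfall_succ (lam : ℝ) (k n : ℕ) :
    fwdDiffDfall lam (k + 1) n
      = ∑ p ∈ antidiagonal n, (n.choose p.1 : ℝ) * dfall lam 1 p.2 * fwdDiffDfall lam k p.1
        - fwdDiffDfall lam k n := by
  have hshift : (fun x => dfall lam (x + 1) n)
      = ∑ p ∈ antidiagonal n,
          ((n.choose p.1 : ℝ) * dfall lam 1 p.2) • fun x => dfall lam x p.1 := by
    funext x
    simp only [dfall_add, Finset.sum_apply, Pi.smul_apply, smul_eq_mul]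
    exact sum_congr rfl fun p _ => by ring
  rw [fwdDiffDfall, Function.iterate_succ_apply', fwdDiff, ← fwdDiff_iter_comp_add, hshift,
    fwdDiff_iter_finsetSum]
  simp [fwdDiffDfall]

noncomputable def ztSumP (lam a : ℝ) (k n : ℕ) : ℝ :=
  a ^ n / ((n.factorial : ℝ) * (dexp lam a - 1) ^ k) * fwdDiffDfall lam k n

lemma ztSumP_mul_ztP (lam a : ℝ) (k i j : ℕ) :
    ztSumP lam a k i * ztP lam a j
      = a ^ (i + j) / (((i + j).factorial : ℝ) * (dexp lam a - 1) ^ (k + 1))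
          * ((i + j).choose i * dfall lam 1 j * fwdDiffDfall lam k i) := by
  rw [ztSumP, ztP, Nat.cast_add_choose]
  field_simp
  ring

lemma ztSumP_succ (lam a : ℝ) (k n : ℕ) :
    ztSumP lam a (k + 1) n
      = ∑ p ∈ antidiagonal n, ztSumP lam a k p.1 * ztP lam a p.2
        - ztSumP lam a k n * ztP lam a 0 := by
  rw [ztSumP, fwdDiffDfall_succ, mul_sub, mul_sum]
  congr 1
  · refine sum_congr rfl fun ⟨i, j⟩ hij => ?_
    obtain rfl : i + j = n := HasAntidiagonal.mem_antidiagonal.mp hij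
    rw [ztSumP_mul_ztP]
  · simp only [ztSumP, ztP, dfall_zero, pow_succ, div_eq_mul_inv, mul_inv]
    ring

section Probability

open MeasureTheory ProbabilityTheory

variable {Ω : Type*} [MeasurableSpace Ω] {μ : Measure Ω}

lemma measure_add_eq_sum_antidiagonal {S Y : Ω → ℕ} (hS : Measurable S) (hY : Measurable Y)
    (hSY : IndepFun S Y μ) (n : ℕ) :
    μ {ω | S ω + Y ω = n} = ∑ p ∈ antidiagonal n, μ {ω | S ω = p.1} * μ {ω | Y ω = p.2} := by
  have hunion : {ω | S ω + Y ω = n} = ⋃ p ∈ antidiagonal n, S ⁻¹' {p.1} ∩ Y ⁻¹' {p.2} := by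
    ext ω
    simp
  rw [hunion, measure_biUnion_finset]
  · exact sum_congr rfl fun p _ => hSY.measure_inter_preimage_eq_mul _ _
      (measurableSet_singleton _) (measurableSet_singleton _)
  · intro p _ q _ hpq
    exact Set.disjoint_left.2 fun ω ⟨h₁, h₂⟩ ⟨h₁', h₂'⟩ =>
      hpq (Prod.ext (h₁.symm.trans h₁') (h₂.symm.trans h₂'))
  · exact fun p _ => (hS (measurableSet_singleton _)).inter (hY (measurableSet_singleton _))

lemma measure_add_eq_ztSumP_succ [IsFiniteMeasure μ] {S Y : Ω → ℕ} (hS : Measurable S)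
    (hY : Measurable Y) (hSY : IndepFun S Y μ) {lam a : ℝ} {k : ℕ}
    (hSpmf : ∀ m, (μ {ω | S ω = m}).toReal = ztSumP lam a k m)
    (hYpmf : ∀ m, 1 ≤ m → (μ {ω | Y ω = m}).toReal = ztP lam a m)
    (hYzero : μ {ω | Y ω = 0} = 0) (n : ℕ) :
    (μ {ω | S ω + Y ω = n}).toReal = ztSumP lam a (k + 1) n := by
  have hn0 : (n, 0) ∈ antidiagonal n := HasAntidiagonal.mem_antidiagonal.mpr rfl
  rw [measure_add_eq_sum_antidiagonal hS hY hSY, ENNReal.toReal_sum (fun _ _ => by finiteness),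
    ztSumP_succ, ← add_sum_erase _ _ hn0, ← add_sum_erase _ _ hn0]
  simp only [ENNReal.toReal_mul, hYzero, hSpmf, ENNReal.toReal_zero, mul_zero, zero_add,
    add_sub_cancel_left]
  refine sum_congr rfl fun ⟨i, j⟩ hij => ?_
  obtain ⟨hne, hsum⟩ := mem_erase.mp hij
  have hj : 1 ≤ j := Nat.one_le_iff_ne_zero.mpr fun hj => hne <| by
    obtain rfl : i + j = n := HasAntidiagonal.mem_antidiagonal.mp hsum
    simp [hj]
  rw [hYpmf j hj]

lemma measure_sum_eq_ztSumP [IsProbabilityMeasure μ] {ι : Type*} (X : ι → Ω → ℕ)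
    (hmeas : ∀ i, Measurable (X i)) (hindep : iIndepFun X μ) {lam a : ℝ}
    (hpmf : ∀ i, ∀ m : ℕ, 1 ≤ m → (μ {ω | X i ω = m}).toReal = ztP lam a m)
    (hzero : ∀ i, μ {ω | X i ω = 0} = 0) (s : Finset ι) (n : ℕ) :
    (μ {ω | ∑ i ∈ s, X i ω = n}).toReal = ztSumP lam a #s n := by
  classical
  induction s using Finset.induction_on generalizing n with
  | empty =>
    rcases eq_or_ne n 0 with rfl | hn
    · simp [ztSumP, fwdDiffDfall, dfall_zero]
    · simp [ztSumP, fwdDiffDfall, dfall_zero_left, hn, eq_comm]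
  | insert j s hj ih =>
    have hindep_j : IndepFun (fun ω => ∑ i ∈ s, X i ω) (X j) μ := by
      simpa only [← Finset.sum_fn] using hindep.indepFun_finsetSum_of_notMem hmeas hj
    rw [card_insert_of_notMem hj]
    simp_rw [sum_insert hj, add_comm (X j _)]
    exact measure_add_eq_ztSumP_succ (Finset.measurable_sum s fun i _ => hmeas i) (hmeas j)
      hindep_j ih (hpmf j) (hzero j) n

end Probability

theorem stmt12_general {Ω : Type*} [MeasurableSpace Ω] (μ : MeasureTheory.Measure Ω)
    [MeasureTheory.IsProbabilityMeasure μ] (lam a : ℝ) (k : ℕ)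
    (X : Fin k → Ω → ℕ) (hmeas : ∀ i, Measurable (X i))
    (hindep : ProbabilityTheory.iIndepFun X μ)
    (hpmf : ∀ i, ∀ m : ℕ, 1 ≤ m → (μ {ω | X i ω = m}).toReal = ztP lam a m)
    (hzero : ∀ i, μ {ω | X i ω = 0} = 0) :
    ∀ n : ℕ, k ≤ n → (μ {ω | ∑ i, X i ω = n}).toReal
      = a ^ n / ((Nat.factorial n : ℝ) * (dexp lam a - 1) ^ k) *
          ∑ l ∈ Finset.range (k + 1), (Nat.choose k l : ℝ) * (-1) ^ (k - l) * dfall lam l n := by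
  intro n _
  rw [← fwdDiffDfall_eq_sum]
  simpa [ztSumP] using measure_sum_eq_ztSumP X hmeas hindep hpmf hzero univ n

theorem stmt12 {Ω : Type*} [MeasurableSpace Ω] (μ : MeasureTheory.Measure Ω)
    [MeasureTheory.IsProbabilityMeasure μ] (lam a : ℝ) (ha : 0 < a) (k : ℕ) (hk : 1 ≤ k)
    (X : Fin k → Ω → ℕ) (hmeas : ∀ i, Measurable (X i))
    (hindep : ProbabilityTheory.iIndepFun X μ)
    (hpmf : ∀ i, ∀ m : ℕ, 1 ≤ m → (μ {ω | X i ω = m}).toReal = ztP lam a m)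
    (hzero : ∀ i, μ {ω | X i ω = 0} = 0) :
    ∀ n : ℕ, k ≤ n → (μ {ω | ∑ i, X i ω = n}).toReal
      = a ^ n / ((Nat.factorial n : ℝ) * (dexp lam a - 1) ^ k) *
          ∑ l ∈ Finset.range (k + 1), (Nat.choose k l : ℝ) * (-1) ^ (k - l) * dfall lam l n :=
  stmt12_general μ lam a k X hmeas hindep hpmf hzero
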